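/- arXiv:1711.06408 — 2 statements merged into one kernel-verified Lean document; each statement's English description precedes it below -/
import Mathlib

section
/- Let m ∈ ℕ and let b₁,…,b_m : ℝⁿ → ℝ be locally integrable functions. The following four statements are equivalent: (a) [b⃗]_* := sup_Q |Q|^{-(m+1)} ∫_Q ∫_{Q^m} |∑_{i=1}^m (b_i(x) − b_i(y_i))| dy⃗ dx < ∞; (b) [b⃗]_{**} := sup_Q |Q|^{-m} ∫_{Q^m} |∑_{i=1}^m (b_i(x_i) − (b_i)_Q)| dx⃗ < ∞; (c) [b⃗]_{***} := sup_Q |Q|^{-2m} ∫_{Q^m} ∫_{Q^m} |∑_{i=1}^m (b_i(x_i) − b_i(y_i))| dy⃗ dx⃗ < ∞; (d) b₁,…,b_m ∈ BMO. Here all suprema are taken over all cubes Q ⊂ ℝⁿ with sides parallel to the axes. -/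
open MeasureTheory ENNReal

noncomputable section

/-- Euclidean space ℝⁿ. -/
abbrev En (n : ℕ) := EuclideanSpace ℝ (Fin n)

/-- The (closed) cube in ℝⁿ centered at `c`, with side length `r` and sides
parallel to the coordinate axes. -/
def cube {n : ℕ} (c : En n) (r : ℝ) : Set (En n) := {y | ∀ i, |y i - c i| ≤ r / 2}

/-- The m-fold product `Q × ⋯ × Q ⊆ (ℝⁿ)^m` of the cube `Q = Q(c, r)`. -/
def cubeProd {n : ℕ} (m : ℕ) (c : En n) (r : ℝ) : Set (Fin m → En n) :=
  Set.univ.pi fun _ => cube c r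

/-- Average `b_Q = |Q|⁻¹ ∫_Q b` over the cube `Q = Q(c, r)`. -/
def cubeAvg {n : ℕ} (b : En n → ℝ) (c : En n) (r : ℝ) : ℝ :=
  (volume (cube c r)).toReal⁻¹ * ∫ x in cube c r, b x

/-- `[b]_* = sup_Q |Q|^{-(m+1)} ∫_Q ∫_{Q^m} |∑ᵢ (bᵢ(x) − bᵢ(yᵢ))| dy⃗ dx`. -/
def bracketStar {n m : ℕ} (b : Fin m → En n → ℝ) : ℝ≥0∞ :=
  ⨆ (c : En n) (r : ℝ) (_ : 0 < r),
    (volume (cube c r) ^ (m + 1))⁻¹ *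
      ∫⁻ x in cube c r, ∫⁻ y in cubeProd m c r,
        ENNReal.ofReal |∑ i, (b i x - b i (y i))|

/-- `[b]_{**} = sup_Q |Q|^{-m} ∫_{Q^m} |∑ᵢ (bᵢ(xᵢ) − (bᵢ)_Q)| dx⃗`. -/
def bracketStarStar {n m : ℕ} (b : Fin m → En n → ℝ) : ℝ≥0∞ :=
  ⨆ (c : En n) (r : ℝ) (_ : 0 < r),
    (volume (cube c r) ^ m)⁻¹ *
      ∫⁻ x in cubeProd m c r,
        ENNReal.ofReal |∑ i, (b i (x i) - cubeAvg (b i) c r)|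

/-- `[b]_{***} = sup_Q |Q|^{-2m} ∫_{Q^m} ∫_{Q^m} |∑ᵢ (bᵢ(xᵢ) − bᵢ(yᵢ))| dy⃗ dx⃗`. -/
def bracketStarStarStar {n m : ℕ} (b : Fin m → En n → ℝ) : ℝ≥0∞ :=
  ⨆ (c : En n) (r : ℝ) (_ : 0 < r),
    (volume (cube c r) ^ (2 * m))⁻¹ *
      ∫⁻ x in cubeProd m c r, ∫⁻ y in cubeProd m c r,
        ENNReal.ofReal |∑ i, (b i (x i) - b i (y i))|

/-- The BMO norm `‖b‖_{BMO} = sup_Q |Q|⁻¹ ∫_Q |b(x) − b_Q| dx`. -/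
def bmoNorm {n : ℕ} (b : En n → ℝ) : ℝ≥0∞ :=
  ⨆ (c : En n) (r : ℝ) (_ : 0 < r),
    (volume (cube c r))⁻¹ * ∫⁻ x in cube c r, ENNReal.ofReal |b x - cubeAvg b c r|

/-- A locally integrable function is in BMO if its BMO norm is finite. -/
def MemBMO {n : ℕ} (b : En n → ℝ) : Prop :=
  LocallyIntegrable b volume ∧ bmoNorm b < ⊤


/-! ### Auxiliary lemmas -/

section AuxAbstract
open Finset Function

variable {α : Type*} [MeasurableSpace α] (P : Measure α) [IsProbabilityMeasure P]
variable {m : ℕ} (B : Fin m → α → ℝ) (A : Fin m → ℝ)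

lemma ofReal_abs_integral_le {α : Type*} [MeasurableSpace α] (μ : Measure α) (g : α → ℝ) :
    ENNReal.ofReal |∫ x, g x ∂μ| ≤ ∫⁻ x, ENNReal.ofReal |g x| ∂μ := by
  simp_rw [← Real.enorm_eq_ofReal_abs]
  exact enorm_integral_le_lintegral_enorm g

lemma measurePreserving_eval' (j : Fin m) :
    MeasurePreserving (fun y : Fin m → α => y j) (Measure.pi fun _ => P) P := by
  refine ⟨measurable_pi_apply j, ?_⟩
  ext s hs
  rw [Measure.map_apply (measurable_pi_apply j) hs, ← Set.univ_pi_update_univ, Measure.pi_pi]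
  rw [Finset.prod_eq_single j]
  · simp
  · intro i _ hij; simp [Function.update_of_ne hij]
  · simp

lemma measurable_F2 (hBm : ∀ i, Measurable (B i)) :
    Measurable fun x : Fin m → α => ENNReal.ofReal |∑ i, (B i (x i) - A i)| :=
  ENNReal.measurable_ofReal.comp <| Measurable.abs <|
    Finset.measurable_sum _ fun i _ => ((hBm i).comp (measurable_pi_apply i)).sub measurable_const

lemma peel_aux (hBm : ∀ i, Measurable (B i)) (hBi : ∀ i, Integrable (B i) P)
    (hA : ∀ i, ∫ t, B i t ∂P = A i) :
    ∀ (s : Finset (Fin m)) (x : Fin m → α),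
      ENNReal.ofReal |∑ i ∈ sᶜ, (B i (x i) - A i)| ≤
        (∫⋯∫⁻_s, (fun x => ENNReal.ofReal |∑ i, (B i (x i) - A i)|) ∂fun _ => P) x := by
  intro s
  induction s using Finset.induction_on with
  | empty => intro x; simp [MeasureTheory.lmarginal_empty]
  | @insert i s hi ih =>
    intro x
    rw [MeasureTheory.lmarginal_insert _ (measurable_F2 B A hBm) hi]
    have hsplit : ∀ t : α, ∑ k ∈ sᶜ, (B k (Function.update x i t k) - A k)
        = (B i t - A i) + ∑ k ∈ (insert i s)ᶜ, (B k (x k) - A k) := by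
      intro t
      rw [Finset.compl_insert, ← Finset.add_sum_erase _ _ (Finset.mem_compl.2 hi)]
      congr 1
      · simp
      · exact Finset.sum_congr rfl fun k hk => by
          rw [Function.update_of_ne (Finset.ne_of_mem_erase hk)]
    set R := ∑ k ∈ (insert i s)ᶜ, (B k (x k) - A k) with hR
    have hint : ∫ t, ((B i t - A i) + R) ∂P = R := by
      have h1 : Integrable (fun t => B i t - A i) P := (hBi i).sub (integrable_const _)
      rw [integral_add h1 (integrable_const _), integral_sub (hBi i) (integrable_const _), hA]
      simp
    calc ENNReal.ofReal |R| = ENNReal.ofReal |∫ t, ((B i t - A i) + R) ∂P| := by rw [hint]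
      _ ≤ ∫⁻ t, ENNReal.ofReal |(B i t - A i) + R| ∂P := ofReal_abs_integral_le _ _
      _ ≤ ∫⁻ t, (∫⋯∫⁻_s, (fun x => ENNReal.ofReal |∑ i, (B i (x i) - A i)|) ∂fun _ => P)
            (Function.update x i t) ∂P := by
          apply lintegral_mono
          intro t
          have h2 := ih (Function.update x i t)
          rwa [hsplit t] at h2

lemma peel [Nonempty α] (hBm : ∀ i, Measurable (B i)) (hBi : ∀ i, Integrable (B i) P)
    (hA : ∀ i, ∫ t, B i t ∂P = A i) (j : Fin m) :
    ∫⁻ t, ENNReal.ofReal |B j t - A j| ∂P ≤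
      ∫⁻ x, ENNReal.ofReal |∑ i, (B i (x i) - A i)| ∂(Measure.pi fun _ : Fin m => P) := by
  obtain ⟨x₀⟩ := (inferInstance : Nonempty α)
  rw [MeasureTheory.lintegral_eq_lmarginal_univ (μ := fun _ : Fin m => P) (fun _ => x₀),
    MeasureTheory.lmarginal_erase _ (measurable_F2 B A hBm) (Finset.mem_univ j)]
  apply lintegral_mono
  intro t
  have h2 := peel_aux P B A hBm hBi hA (Finset.univ.erase j) (Function.update (fun _ => x₀) j t)
  have hcompl : (Finset.univ.erase j)ᶜ = {j} := by rw [Finset.compl_erase]; simp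
  rw [hcompl] at h2
  simpa using h2

lemma integrable_eval (hBi : ∀ i, Integrable (B i) P) (i : Fin m) :
    Integrable (fun y : Fin m → α => B i (y i)) (Measure.pi fun _ => P) :=
  ((measurePreserving_eval' P i).integrable_comp (hBi i).aestronglyMeasurable).2 (hBi i)

lemma integral_eval (hBi : ∀ i, Integrable (B i) P) (i : Fin m) :
    ∫ y : Fin m → α, B i (y i) ∂(Measure.pi fun _ => P) = ∫ t, B i t ∂P := by
  have h := (measurePreserving_eval' P (α := α) i).map_eq
  have h2 := integral_map (μ := Measure.pi fun _ : Fin m => P) (φ := fun y => y i)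
    (measurable_pi_apply i).aemeasurable (f := B i) (h.symm ▸ (hBi i).aestronglyMeasurable)
  rw [h] at h2
  exact h2.symm

lemma lintegral_eval {g : α → ℝ≥0∞} (hg : Measurable g) (i : Fin m) :
    ∫⁻ y : Fin m → α, g (y i) ∂(Measure.pi fun _ => P) = ∫⁻ t, g t ∂P :=
  (measurePreserving_eval' P i).lintegral_comp hg

/-- b-term ≤ a-term -/
lemma bb_le_a (hBm : ∀ i, Measurable (B i)) (hBi : ∀ i, Integrable (B i) P)
    (hA : ∀ i, ∫ t, B i t ∂P = A i) :
    ∫⁻ x, ENNReal.ofReal |∑ i, (B i (x i) - A i)| ∂(Measure.pi fun _ : Fin m => P) ≤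
      ∫⁻ x, ∫⁻ y, ENNReal.ofReal |∑ i, (B i x - B i (y i))| ∂(Measure.pi fun _ : Fin m => P) ∂P := by
  rw [lintegral_lintegral_swap]
  · apply lintegral_mono
    intro y
    have hint : ∫ x, ∑ i, (B i x - B i (y i)) ∂P = ∑ i, (A i - B i (y i)) := by
      rw [integral_finset_sum (f := fun i x => B i x - B i (y i)) _
        fun i _ => (hBi i).sub (integrable_const _)]
      exact Finset.sum_congr rfl fun i _ => by
        rw [integral_sub (hBi i) (integrable_const _), hA, integral_const]; simp
    have habs : |∑ i, (A i - B i (y i))| = |∑ i, (B i (y i) - A i)| := by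
      rw [← abs_neg, ← Finset.sum_neg_distrib]
      congr 1
      exact Finset.sum_congr rfl fun i _ => by ring
    calc ENNReal.ofReal |∑ i, (B i (y i) - A i)|
        = ENNReal.ofReal |∫ x, ∑ i, (B i x - B i (y i)) ∂P| := by rw [hint, habs]
      _ ≤ ∫⁻ x, ENNReal.ofReal |∑ i, (B i x - B i (y i))| ∂P := ofReal_abs_integral_le _ _
  · apply Measurable.aemeasurable
    apply ENNReal.measurable_ofReal.comp
    apply Measurable.abs
    exact Finset.measurable_sum _ fun i _ =>
      ((hBm i).comp measurable_fst).sub ((hBm i).comp ((measurable_pi_apply i).comp measurable_snd))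

/-- b-term ≤ c-term -/
lemma bb_le_c (hBi : ∀ i, Integrable (B i) P) (hA : ∀ i, ∫ t, B i t ∂P = A i) :
    ∫⁻ x, ENNReal.ofReal |∑ i, (B i (x i) - A i)| ∂(Measure.pi fun _ : Fin m => P) ≤
      ∫⁻ x, ∫⁻ y, ENNReal.ofReal |∑ i, (B i (x i) - B i (y i))|
        ∂(Measure.pi fun _ : Fin m => P) ∂(Measure.pi fun _ : Fin m => P) := by
  apply lintegral_mono
  intro x
  have hint : ∫ y, ∑ i, (B i (x i) - B i (y i)) ∂(Measure.pi fun _ : Fin m => P)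
      = ∑ i, (B i (x i) - A i) := by
    rw [integral_finset_sum (f := fun i (y : Fin m → α) => B i (x i) - B i (y i)) _
      fun i _ => (integrable_const _).sub (integrable_eval P B hBi i)]
    exact Finset.sum_congr rfl fun i _ => by
      rw [integral_sub (integrable_const _) (integrable_eval P B hBi i),
        integral_eval P B hBi i, hA, integral_const]; simp
  show ENNReal.ofReal |∑ i, (B i (x i) - A i)| ≤
    ∫⁻ y, ENNReal.ofReal |∑ i, (B i (x i) - B i (y i))| ∂(Measure.pi fun _ : Fin m => P)
  rw [← hint]
  exact ofReal_abs_integral_le _ _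

/-- c-term ≤ b-term + b-term -/
lemma c_le_two_bb (hBm : ∀ i, Measurable (B i)) :
    ∫⁻ x, ∫⁻ y, ENNReal.ofReal |∑ i, (B i (x i) - B i (y i))|
        ∂(Measure.pi fun _ : Fin m => P) ∂(Measure.pi fun _ : Fin m => P) ≤
      (∫⁻ x, ENNReal.ofReal |∑ i, (B i (x i) - A i)| ∂(Measure.pi fun _ : Fin m => P)) +
      (∫⁻ x, ENNReal.ofReal |∑ i, (B i (x i) - A i)| ∂(Measure.pi fun _ : Fin m => P)) := by
  have hpt : ∀ x y : Fin m → α, ENNReal.ofReal |∑ i, (B i (x i) - B i (y i))| ≤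
      ENNReal.ofReal |∑ i, (B i (x i) - A i)| + ENNReal.ofReal |∑ i, (B i (y i) - A i)| := by
    intro x y
    rw [← ENNReal.ofReal_add (abs_nonneg _) (abs_nonneg _)]
    apply ENNReal.ofReal_le_ofReal
    have heq : ∑ i, (B i (x i) - B i (y i))
        = (∑ i, (B i (x i) - A i)) - ∑ i, (B i (y i) - A i) := by
      rw [← Finset.sum_sub_distrib]
      exact Finset.sum_congr rfl fun i _ => by ring
    rw [heq, sub_eq_add_neg]
    exact (abs_add_le _ _).trans (by rw [abs_neg])
  calc ∫⁻ x, ∫⁻ y, ENNReal.ofReal |∑ i, (B i (x i) - B i (y i))|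
        ∂(Measure.pi fun _ : Fin m => P) ∂(Measure.pi fun _ : Fin m => P)
      ≤ ∫⁻ x, ∫⁻ y, (ENNReal.ofReal |∑ i, (B i (x i) - A i)|
          + ENNReal.ofReal |∑ i, (B i (y i) - A i)|)
        ∂(Measure.pi fun _ : Fin m => P) ∂(Measure.pi fun _ : Fin m => P) :=
        lintegral_mono fun x => lintegral_mono fun y => hpt x y
    _ = _ := by
        have h1 : ∀ x : Fin m → α, ∫⁻ y, (ENNReal.ofReal |∑ i, (B i (x i) - A i)|
            + ENNReal.ofReal |∑ i, (B i (y i) - A i)|) ∂(Measure.pi fun _ : Fin m => P)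
            = ENNReal.ofReal |∑ i, (B i (x i) - A i)|
              + ∫⁻ y, ENNReal.ofReal |∑ i, (B i (y i) - A i)|
                ∂(Measure.pi fun _ : Fin m => P) := by
          intro x
          rw [lintegral_add_right _ (measurable_F2 B A hBm), lintegral_const, measure_univ,
            mul_one]
        simp_rw [h1]
        rw [lintegral_add_right _ measurable_const, lintegral_const, measure_univ, mul_one]

/-- a-term ≤ ∑N + ∑N -/
lemma a_le_sum (hBm : ∀ i, Measurable (B i)) :
    ∫⁻ x, ∫⁻ y, ENNReal.ofReal |∑ i, (B i x - B i (y i))| ∂(Measure.pi fun _ : Fin m => P) ∂P ≤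
      (∑ i, ∫⁻ t, ENNReal.ofReal |B i t - A i| ∂P) +
      (∑ i, ∫⁻ t, ENNReal.ofReal |B i t - A i| ∂P) := by
  have hpt : ∀ (x : α) (y : Fin m → α), ENNReal.ofReal |∑ i, (B i x - B i (y i))| ≤
      (∑ i, ENNReal.ofReal |B i x - A i|) + ∑ i, ENNReal.ofReal |B i (y i) - A i| := by
    intro x y
    have h1 : |∑ i, (B i x - B i (y i))| ≤ (∑ i, |B i x - A i|) + ∑ i, |B i (y i) - A i| := by
      calc |∑ i, (B i x - B i (y i))| = |∑ i, ((B i x - A i) + (A i - B i (y i)))| := by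
            congr 1; exact Finset.sum_congr rfl fun i _ => by ring
        _ ≤ ∑ i, |(B i x - A i) + (A i - B i (y i))| := Finset.abs_sum_le_sum_abs _ _
        _ ≤ ∑ i, (|B i x - A i| + |B i (y i) - A i|) := Finset.sum_le_sum fun i _ =>
            (abs_add_le _ _).trans (le_of_eq (by rw [abs_sub_comm (A i)]))
        _ = _ := Finset.sum_add_distrib
    calc ENNReal.ofReal |∑ i, (B i x - B i (y i))|
        ≤ ENNReal.ofReal ((∑ i, |B i x - A i|) + ∑ i, |B i (y i) - A i|) :=
          ENNReal.ofReal_le_ofReal h1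
      _ = _ := by
          rw [ENNReal.ofReal_add (Finset.sum_nonneg fun i _ => abs_nonneg _)
            (Finset.sum_nonneg fun i _ => abs_nonneg _),
            ENNReal.ofReal_sum_of_nonneg (fun i _ => abs_nonneg _),
            ENNReal.ofReal_sum_of_nonneg (fun i _ => abs_nonneg _)]
  have hHmeas : Measurable fun y : Fin m → α => ∑ i, ENNReal.ofReal |B i (y i) - A i| :=
    Finset.measurable_sum _ fun i _ => ENNReal.measurable_ofReal.comp <| Measurable.abs <|
      ((hBm i).comp (measurable_pi_apply i)).sub measurable_const
  calc ∫⁻ x, ∫⁻ y, ENNReal.ofReal |∑ i, (B i x - B i (y i))| ∂(Measure.pi fun _ : Fin m => P) ∂P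
      ≤ ∫⁻ x, ∫⁻ y, ((∑ i, ENNReal.ofReal |B i x - A i|)
          + ∑ i, ENNReal.ofReal |B i (y i) - A i|) ∂(Measure.pi fun _ : Fin m => P) ∂P :=
        lintegral_mono fun x => lintegral_mono fun y => hpt x y
    _ = ∫⁻ x, ((∑ i, ENNReal.ofReal |B i x - A i|)
          + ∑ i, ∫⁻ t, ENNReal.ofReal |B i t - A i| ∂P) ∂P := by
        apply lintegral_congr
        intro x
        rw [lintegral_add_right _ hHmeas, lintegral_const, measure_univ, mul_one]
        congr 1
        rw [lintegral_finset_sum (f := fun i (y : Fin m → α) => ENNReal.ofReal |B i (y i) - A i|)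
          _ fun i _ => ENNReal.measurable_ofReal.comp <| Measurable.abs <|
          ((hBm i).comp (measurable_pi_apply i)).sub measurable_const]
        exact Finset.sum_congr rfl fun i _ => lintegral_eval P
          (ENNReal.measurable_ofReal.comp <| Measurable.abs <| (hBm i).sub measurable_const) i
    _ = _ := by
        rw [lintegral_add_right _ measurable_const, lintegral_const, measure_univ, mul_one,
          lintegral_finset_sum (f := fun i (t : α) => ENNReal.ofReal |B i t - A i|)
            _ fun i _ => ENNReal.measurable_ofReal.comp <| Measurable.abs <|
            (hBm i).sub measurable_const]

end AuxAbstract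

/-! ### Cube geometry -/

lemma cube_eq_preimage {n : ℕ} (c : En n) (r : ℝ) :
    cube c r = ((MeasurableEquiv.toLp 2 (Fin n → ℝ)).symm) ⁻¹'
      (Set.univ.pi fun i => Set.Icc (c i - r/2) (c i + r/2)) := by
  ext y
  have hco : ∀ i, ((MeasurableEquiv.toLp 2 (Fin n → ℝ)).symm) y i = y i := fun i => rfl
  simp only [cube, Set.mem_setOf_eq, Set.mem_preimage, Set.mem_pi, Set.mem_univ, Set.mem_Icc,
    forall_true_left, hco]
  constructor
  · intro h i; have := abs_le.1 (h i); exact ⟨by linarith [this.1], by linarith [this.2]⟩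
  · intro h i; rw [abs_le]; have := h i
    exact ⟨by linarith [this.1], by linarith [this.2]⟩

lemma volume_cube {n : ℕ} (c : En n) (r : ℝ) :
    volume (cube c r) = ENNReal.ofReal r ^ n := by
  rw [cube_eq_preimage]
  rw [(EuclideanSpace.volume_preserving_symm_measurableEquiv_toLp (Fin n)).measure_preimage
    ((MeasurableSet.univ_pi fun i => measurableSet_Icc).nullMeasurableSet)]
  rw [volume_pi_pi]
  simp only [Real.volume_Icc]
  rw [Finset.prod_congr rfl fun i _ => by rw [show c i + r/2 - (c i - r/2) = r by ring]]
  simp [Finset.prod_const]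

lemma measurableSet_cube {n : ℕ} (c : En n) (r : ℝ) : MeasurableSet (cube c r) := by
  rw [cube_eq_preimage]
  exact ((MeasurableEquiv.toLp 2 (Fin n → ℝ)).symm).measurable
    (MeasurableSet.univ_pi fun i => measurableSet_Icc)

lemma isCompact_cube {n : ℕ} (c : En n) (r : ℝ) : IsCompact (cube c r) := by
  have hclosed : IsClosed (cube c r) := by
    have h : cube c r = ⋂ i, (fun y : En n => y i) ⁻¹' Metric.closedBall (c i) (r/2) := by
      ext y
      simp [cube, Metric.mem_closedBall, Real.dist_eq]
    rw [h]
    exact isClosed_iInter fun i =>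
      IsClosed.preimage (EuclideanSpace.proj (𝕜 := ℝ) i).continuous Metric.isClosed_closedBall
  have hbdd : Bornology.IsBounded (cube c r) := by
    apply Bornology.IsBounded.subset (Metric.isBounded_closedBall
      (x := c) (r := Real.sqrt (n * (r/2)^2)))
    intro y hy
    rw [Metric.mem_closedBall, EuclideanSpace.dist_eq]
    apply Real.sqrt_le_sqrt
    calc ∑ i, dist (y i) (c i) ^ 2 ≤ ∑ _i : Fin n, (r/2)^2 := by
          apply Finset.sum_le_sum
          intro i _
          have h1 : dist (y i) (c i) ≤ r/2 := by rw [Real.dist_eq]; exact hy i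
          exact pow_le_pow_left₀ dist_nonneg h1 2
      _ = n * (r/2)^2 := by simp [Finset.sum_const, mul_comm]
  exact Metric.isCompact_of_isClosed_isBounded hclosed hbdd

lemma volume_cube_ne_zero {n : ℕ} (c : En n) {r : ℝ} (hr : 0 < r) :
    volume (cube c r) ≠ 0 := by
  rw [volume_cube]
  exact pow_ne_zero _ (ENNReal.ofReal_pos.2 hr).ne'

lemma volume_cube_ne_top {n : ℕ} (c : En n) {r : ℝ} (hr : 0 < r) :
    volume (cube c r) ≠ ⊤ := by
  rw [volume_cube]
  exact ENNReal.pow_ne_top ENNReal.ofReal_ne_top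

lemma isProbability_nuQ {n : ℕ} (c : En n) {r : ℝ} (hr : 0 < r) :
    IsProbabilityMeasure ((volume (cube c r))⁻¹ • volume.restrict (cube c r)) := by
  constructor
  rw [Measure.smul_apply, Measure.restrict_apply_univ, smul_eq_mul]
  exact ENNReal.inv_mul_cancel (volume_cube_ne_zero c hr) (volume_cube_ne_top c hr)

lemma pi_nuQ {n : ℕ} (m : ℕ) (c : En n) {r : ℝ} (hr : 0 < r) :
    Measure.pi (fun _ : Fin m => (volume (cube c r))⁻¹ • volume.restrict (cube c r)) =
      ((volume (cube c r))⁻¹) ^ m •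
        (volume : Measure (Fin m → En n)).restrict (cubeProd m c r) := by
  haveI := isProbability_nuQ c hr
  refine (Measure.pi_eq (μ := fun _ : Fin m => (volume (cube c r))⁻¹ • volume.restrict (cube c r)) fun s hs => ?_)
  rw [Measure.smul_apply, Measure.restrict_apply (MeasurableSet.univ_pi hs)]
  rw [cubeProd, ← Set.pi_inter_distrib]
  rw [volume_pi, Measure.pi_pi]
  simp only [Measure.smul_apply, Measure.restrict_apply (hs _), smul_eq_mul]
  rw [Finset.prod_mul_distrib, Finset.prod_const]
  simp [Finset.card_univ]

/-- Lemma 2.1: for locally integrable `b₁, …, b_m`, the finiteness of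
`[b]_*`, of `[b]_{**}`, of `[b]_{***}`, and membership of all `bᵢ` in BMO are equivalent. -/
theorem bmo_characterization_tfae {n m : ℕ} (b : Fin m → En n → ℝ)
    (hb : ∀ i, LocallyIntegrable (b i) volume) :
    List.TFAE [bracketStar b < ⊤, bracketStarStar b < ⊤, bracketStarStarStar b < ⊤,
      ∀ i, MemBMO (b i)] := by
  classical
  set B : Fin m → En n → ℝ := fun i => ((hb i).aestronglyMeasurable).mk (b i) with hBdef
  have hBmeas : ∀ i, Measurable (B i) := fun i =>
    ((hb i).aestronglyMeasurable).stronglyMeasurable_mk.measurable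
  have hae : ∀ i, b i =ᵐ[volume] B i := fun i => ((hb i).aestronglyMeasurable).ae_eq_mk
  have KEY : ∀ (c : En n) (r : ℝ), 0 < r →
      ((((volume (cube c r)) ^ m)⁻¹ *
          ∫⁻ x in cubeProd m c r,
            ENNReal.ofReal |∑ i, (b i (x i) - cubeAvg (b i) c r)|) ≤
        (((volume (cube c r)) ^ (m + 1))⁻¹ *
          ∫⁻ x in cube c r, ∫⁻ y in cubeProd m c r,
            ENNReal.ofReal |∑ i, (b i x - b i (y i))|)) ∧
      ((∀ j, (((volume (cube c r)))⁻¹ *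
          ∫⁻ x in cube c r, ENNReal.ofReal |b j x - cubeAvg (b j) c r|) ≤
        (((volume (cube c r)) ^ m)⁻¹ *
          ∫⁻ x in cubeProd m c r,
            ENNReal.ofReal |∑ i, (b i (x i) - cubeAvg (b i) c r)|))) ∧
      ((((volume (cube c r)) ^ (m + 1))⁻¹ *
          ∫⁻ x in cube c r, ∫⁻ y in cubeProd m c r,
            ENNReal.ofReal |∑ i, (b i x - b i (y i))|) ≤
        (∑ i, bmoNorm (b i)) + ∑ i, bmoNorm (b i)) ∧
      ((((volume (cube c r)) ^ (2 * m))⁻¹ *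
          ∫⁻ x in cubeProd m c r, ∫⁻ y in cubeProd m c r,
            ENNReal.ofReal |∑ i, (b i (x i) - b i (y i))|) ≤
        (((volume (cube c r)) ^ m)⁻¹ *
          ∫⁻ x in cubeProd m c r,
            ENNReal.ofReal |∑ i, (b i (x i) - cubeAvg (b i) c r)|) +
        (((volume (cube c r)) ^ m)⁻¹ *
          ∫⁻ x in cubeProd m c r,
            ENNReal.ofReal |∑ i, (b i (x i) - cubeAvg (b i) c r)|)) ∧
      ((((volume (cube c r)) ^ m)⁻¹ *
          ∫⁻ x in cubeProd m c r,
            ENNReal.ofReal |∑ i, (b i (x i) - cubeAvg (b i) c r)|) ≤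
        (((volume (cube c r)) ^ (2 * m))⁻¹ *
          ∫⁻ x in cubeProd m c r, ∫⁻ y in cubeProd m c r,
            ENNReal.ofReal |∑ i, (b i (x i) - b i (y i))|)) := by
    intro c r hr
    have hV0 : volume (cube c r) ≠ 0 := volume_cube_ne_zero c hr
    have hVt : volume (cube c r) ≠ ⊤ := volume_cube_ne_top c hr
    have hVinvt : (volume (cube c r))⁻¹ ≠ ⊤ := ENNReal.inv_ne_top.2 hV0
    have hVmt : ((volume (cube c r)) ^ m)⁻¹ ≠ ⊤ := ENNReal.inv_ne_top.2 (pow_ne_zero m hV0)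
    haveI hPν : IsProbabilityMeasure ((volume (cube c r))⁻¹ • volume.restrict (cube c r)) := isProbability_nuQ c hr
    have hpi : Measure.pi (fun _ : Fin m => ((volume (cube c r))⁻¹ • volume.restrict (cube c r))) =
        ((volume (cube c r))⁻¹) ^ m • (volume : Measure (Fin m → En n)).restrict (cubeProd m c r) :=
      pi_nuQ m c hr
    have hνae : ∀ i, b i =ᵐ[((volume (cube c r))⁻¹ • volume.restrict (cube c r))] B i := fun i =>
      Measure.ae_smul_measure ((hae i).restrict) (volume (cube c r))⁻¹
    have hνaeAll : ∀ᵐ x ∂((volume (cube c r))⁻¹ • volume.restrict (cube c r)), ∀ i, b i x = B i x := ae_all_iff.2 hνae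
    have hPmae : ∀ᵐ x ∂(Measure.pi fun _ : Fin m => ((volume (cube c r))⁻¹ • volume.restrict (cube c r))), ∀ i, b i (x i) = B i (x i) :=
      ae_all_iff.2 fun i => (Measure.tendsto_eval_ae_ae (μ := fun _ : Fin m => ((volume (cube c r))⁻¹ • volume.restrict (cube c r))) (i := i)).eventually (hνae i)
    have hbQ : ∀ i, IntegrableOn (b i) (cube c r) volume := fun i =>
      (hb i).integrableOn_isCompact (isCompact_cube c r)
    have hBν : ∀ i, Integrable (B i) ((volume (cube c r))⁻¹ • volume.restrict (cube c r)) := fun i =>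
      (((hbQ i).smul_measure hVinvt).congr (hνae i))
    set A : Fin m → ℝ := fun i => ∫ t, B i t ∂((volume (cube c r))⁻¹ • volume.restrict (cube c r)) with hAdef
    have hA : ∀ i, ∫ t, B i t ∂((volume (cube c r))⁻¹ • volume.restrict (cube c r)) = A i := fun i => rfl
    have hAavg : ∀ i, cubeAvg (b i) c r = A i := by
      intro i
      have h1 : A i = ∫ t, b i t ∂((volume (cube c r))⁻¹ • volume.restrict (cube c r)) := integral_congr_ae (hνae i).symm
      rw [h1, integral_smul_measure, cubeAvg, ENNReal.toReal_inv, smul_eq_mul]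
    have hLν : ∀ g : En n → ℝ≥0∞,
        ∫⁻ t, g t ∂((volume (cube c r))⁻¹ • volume.restrict (cube c r)) = (volume (cube c r))⁻¹ * ∫⁻ t in cube c r, g t := by
      intro g
      rw [lintegral_smul_measure, smul_eq_mul]
    have hLPm : ∀ g : (Fin m → En n) → ℝ≥0∞,
        ∫⁻ x, g x ∂(Measure.pi fun _ : Fin m => ((volume (cube c r))⁻¹ • volume.restrict (cube c r)))
          = ((volume (cube c r)) ^ m)⁻¹ * ∫⁻ x in cubeProd m c r, g x := by
      intro g
      rw [hpi, lintegral_smul_measure, ENNReal.inv_pow, smul_eq_mul]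
    have E4 : ∀ j, ((volume (cube c r))⁻¹ *
          ∫⁻ x in cube c r, ENNReal.ofReal |b j x - cubeAvg (b j) c r|)
        = ∫⁻ t, ENNReal.ofReal |B j t - A j| ∂((volume (cube c r))⁻¹ • volume.restrict (cube c r)) := by
      intro j
      rw [hLν]
      congr 1
      apply lintegral_congr_ae
      filter_upwards [(hae j).restrict (s := cube c r)] with t ht
      rw [ht, hAavg j]
    have E1 : ∫⁻ x, ENNReal.ofReal |∑ i, (B i (x i) - A i)| ∂(Measure.pi fun _ : Fin m => ((volume (cube c r))⁻¹ • volume.restrict (cube c r)))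
        = ((volume (cube c r)) ^ m)⁻¹ *
          ∫⁻ x in cubeProd m c r,
            ENNReal.ofReal |∑ i, (b i (x i) - cubeAvg (b i) c r)| := by
      rw [← hLPm]
      apply lintegral_congr_ae
      filter_upwards [hPmae] with x hx
      have hs : ∑ i, (B i (x i) - A i) = ∑ i, (b i (x i) - cubeAvg (b i) c r) :=
        Finset.sum_congr rfl fun i _ => by rw [hx i, hAavg i]
      rw [hs]
    have E2 : ∫⁻ x, ∫⁻ y, ENNReal.ofReal |∑ i, (B i x - B i (y i))| ∂(Measure.pi fun _ : Fin m => ((volume (cube c r))⁻¹ • volume.restrict (cube c r))) ∂((volume (cube c r))⁻¹ • volume.restrict (cube c r))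
        = (((volume (cube c r)) ^ (m + 1))⁻¹ *
          ∫⁻ x in cube c r, ∫⁻ y in cubeProd m c r,
            ENNReal.ofReal |∑ i, (b i x - b i (y i))|) := by
      have step1 : ∫⁻ x, ∫⁻ y, ENNReal.ofReal |∑ i, (B i x - B i (y i))| ∂(Measure.pi fun _ : Fin m => ((volume (cube c r))⁻¹ • volume.restrict (cube c r))) ∂((volume (cube c r))⁻¹ • volume.restrict (cube c r))
          = ∫⁻ x, ∫⁻ y, ENNReal.ofReal |∑ i, (b i x - b i (y i))| ∂(Measure.pi fun _ : Fin m => ((volume (cube c r))⁻¹ • volume.restrict (cube c r))) ∂((volume (cube c r))⁻¹ • volume.restrict (cube c r)) := by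
        apply lintegral_congr_ae
        filter_upwards [hνaeAll] with x hx
        apply lintegral_congr_ae
        filter_upwards [hPmae] with y hy
        have hs : ∑ i, (B i x - B i (y i)) = ∑ i, (b i x - b i (y i)) :=
          Finset.sum_congr rfl fun i _ => by rw [hx i, hy i]
        rw [hs]
      rw [step1, hLν]
      have step2 : ∀ x : En n,
          ∫⁻ y, ENNReal.ofReal |∑ i, (b i x - b i (y i))| ∂(Measure.pi fun _ : Fin m => ((volume (cube c r))⁻¹ • volume.restrict (cube c r)))
            = ((volume (cube c r)) ^ m)⁻¹ *
              ∫⁻ y in cubeProd m c r, ENNReal.ofReal |∑ i, (b i x - b i (y i))| :=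
        fun x => hLPm _
      rw [lintegral_congr fun x => step2 x, lintegral_const_mul' _ _ hVmt, ← mul_assoc]
      congr 1
      rw [ENNReal.inv_pow, ENNReal.inv_pow, mul_comm, ← pow_succ]
    have E3 : ∫⁻ x, ∫⁻ y, ENNReal.ofReal |∑ i, (B i (x i) - B i (y i))| ∂(Measure.pi fun _ : Fin m => ((volume (cube c r))⁻¹ • volume.restrict (cube c r))) ∂(Measure.pi fun _ : Fin m => ((volume (cube c r))⁻¹ • volume.restrict (cube c r)))
        = (((volume (cube c r)) ^ (2 * m))⁻¹ *
          ∫⁻ x in cubeProd m c r, ∫⁻ y in cubeProd m c r,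
            ENNReal.ofReal |∑ i, (b i (x i) - b i (y i))|) := by
      have step1 : ∫⁻ x, ∫⁻ y, ENNReal.ofReal |∑ i, (B i (x i) - B i (y i))| ∂(Measure.pi fun _ : Fin m => ((volume (cube c r))⁻¹ • volume.restrict (cube c r))) ∂(Measure.pi fun _ : Fin m => ((volume (cube c r))⁻¹ • volume.restrict (cube c r)))
          = ∫⁻ x, ∫⁻ y, ENNReal.ofReal |∑ i, (b i (x i) - b i (y i))| ∂(Measure.pi fun _ : Fin m => ((volume (cube c r))⁻¹ • volume.restrict (cube c r))) ∂(Measure.pi fun _ : Fin m => ((volume (cube c r))⁻¹ • volume.restrict (cube c r))) := by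
        apply lintegral_congr_ae
        filter_upwards [hPmae] with x hx
        apply lintegral_congr_ae
        filter_upwards [hPmae] with y hy
        have hs : ∑ i, (B i (x i) - B i (y i)) = ∑ i, (b i (x i) - b i (y i)) :=
          Finset.sum_congr rfl fun i _ => by rw [hx i, hy i]
        rw [hs]
      rw [step1, hLPm]
      have step2 : ∀ x : Fin m → En n,
          ∫⁻ y, ENNReal.ofReal |∑ i, (b i (x i) - b i (y i))| ∂(Measure.pi fun _ : Fin m => ((volume (cube c r))⁻¹ • volume.restrict (cube c r)))
            = ((volume (cube c r)) ^ m)⁻¹ *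
              ∫⁻ y in cubeProd m c r, ENNReal.ofReal |∑ i, (b i (x i) - b i (y i))| :=
        fun x => hLPm _
      rw [lintegral_congr fun x => step2 x, lintegral_const_mul' _ _ hVmt, ← mul_assoc]
      congr 1
      rw [ENNReal.inv_pow, ENNReal.inv_pow, ← pow_add, two_mul]
    refine ⟨?_, ?_, ?_, ?_, ?_⟩
    · rw [← E1, ← E2]
      exact bb_le_a _ B A hBmeas hBν hA
    · intro j
      rw [← E1, E4 j]
      exact peel _ B A hBmeas hBν hA j
    · rw [← E2]
      refine (a_le_sum _ B A hBmeas).trans (add_le_add ?_ ?_) <;>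
      · refine Finset.sum_le_sum fun i _ => ?_
        rw [show (i : Fin m) = i from rfl, ← E4 i]
        exact le_iSup_of_le c (le_iSup_of_le r (le_iSup_of_le hr le_rfl))
    · rw [← E1, ← E3]
      exact c_le_two_bb _ B A hBmeas
    · rw [← E1, ← E3]
      exact bb_le_c _ B A hBν hA
  tfae_have 1 → 2 := by
    intro h
    refine lt_of_le_of_lt (iSup_le fun c => iSup_le fun r => iSup_le fun hr => ?_) h
    exact ((KEY c r hr).1).trans (le_iSup_of_le c (le_iSup_of_le r (le_iSup_of_le hr le_rfl)))
  tfae_have 2 → 3 := by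
    intro h
    refine lt_of_le_of_lt (iSup_le fun c => iSup_le fun r => iSup_le fun hr => ?_)
      (ENNReal.add_lt_top.2 ⟨h, h⟩)
    exact ((KEY c r hr).2.2.2.1).trans
      (add_le_add (le_iSup_of_le c (le_iSup_of_le r (le_iSup_of_le hr le_rfl)))
        (le_iSup_of_le c (le_iSup_of_le r (le_iSup_of_le hr le_rfl))))
  tfae_have 3 → 2 := by
    intro h
    refine lt_of_le_of_lt (iSup_le fun c => iSup_le fun r => iSup_le fun hr => ?_) h
    exact ((KEY c r hr).2.2.2.2).trans
      (le_iSup_of_le c (le_iSup_of_le r (le_iSup_of_le hr le_rfl)))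
  tfae_have 2 → 4 := by
    intro h i
    refine ⟨hb i, lt_of_le_of_lt (iSup_le fun c => iSup_le fun r => iSup_le fun hr => ?_) h⟩
    exact ((KEY c r hr).2.1 i).trans
      (le_iSup_of_le c (le_iSup_of_le r (le_iSup_of_le hr le_rfl)))
  tfae_have 4 → 1 := by
    intro h
    have hsum : ((∑ i, bmoNorm (b i)) + ∑ i, bmoNorm (b i)) < ⊤ :=
      ENNReal.add_lt_top.2 ⟨ENNReal.sum_lt_top.2 fun i _ => (h i).2,
        ENNReal.sum_lt_top.2 fun i _ => (h i).2⟩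
    exact lt_of_le_of_lt
      (iSup_le fun c => iSup_le fun r => iSup_le fun hr => (KEY c r hr).2.2.1) hsum
  tfae_finish

end
end

section
/- Let m ∈ ℕ and let b₁,…,b_m : ℝⁿ → ℝ be locally integrable with [b⃗]_{***} < ∞. Then for every cube Q ⊂ ℝⁿ with sides parallel to the axes, |Q|^{-2m} ∫_{Q^m} ∫_{Q^m} ∑_{i=1}^m |b_i(x_i) − b_i(y_i)| dy⃗ dx⃗ ≤ 2^m [b⃗]_{***}. -/
open MeasureTheory ENNReal

noncomputable section

/-!
For a set `s` of indices, exchanging `xᵢ` and `yᵢ` for `i ∈ s` preserves the measure on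
`Q^m × Q^m` and flips the sign of `bᵢ(xᵢ) − bᵢ(yᵢ)` for `i ∈ s`. Swapping exactly where these
differences are negative turns `∑ᵢ |bᵢ(xᵢ) − bᵢ(yᵢ)|` into `∑ᵢ (bᵢ(xᵢ) − bᵢ(yᵢ))` evaluated at the
swapped point, so pointwise it is bounded by the sum over all `2^m` swaps of
`|∑ᵢ (bᵢ(xᵢ) − bᵢ(yᵢ))|`, and each of these `2^m` terms integrates to the quantity whose supremum
is `[b]_{***}`.
-/

section SwapCoords

variable {ι α : Type*} [Fintype ι] [DecidableEq ι]

def swapCoords (s : Finset ι) (p : (ι → α) × (ι → α)) : (ι → α) × (ι → α) :=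
  (s.piecewise p.2 p.1, s.piecewise p.1 p.2)

lemma measurePreserving_swapCoords [MeasurableSpace α] (μ : ι → Measure α) [∀ i, SigmaFinite (μ i)]
    (s : Finset ι) :
    MeasurePreserving (swapCoords s) ((Measure.pi μ).prod (Measure.pi μ))
      ((Measure.pi μ).prod (Measure.pi μ)) := by
  set e := MeasurableEquiv.arrowProdEquivProdArrow α α ι
  have he := measurePreserving_arrowProdEquivProdArrow α α ι μ μ
  have hswap : ∀ i, MeasurePreserving (if i ∈ s then Prod.swap else id)
      ((μ i).prod (μ i)) ((μ i).prod (μ i)) := fun i => by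
    split_ifs
    · exact Measure.measurePreserving_swap
    · exact MeasurePreserving.id _
  have hdecomp : swapCoords s =
      e ∘ (fun a i => (if i ∈ s then Prod.swap else id) (a i)) ∘ e.symm := by
    funext p
    refine Prod.ext (funext fun i => ?_) (funext fun i => ?_) <;>
      by_cases h : i ∈ s <;>
      simp [swapCoords, h, e, MeasurableEquiv.arrowProdEquivProdArrow,
        Equiv.arrowProdEquivProdArrow]
  rw [hdecomp]
  exact he.comp ((measurePreserving_pi _ _ hswap).comp he.symm)

lemma exists_sum_sub_swapCoords_eq_sum_abs (f : ι → α → ℝ) (p : (ι → α) × (ι → α)) :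
    ∃ s : Finset ι, ∑ i, (f i ((swapCoords s p).1 i) - f i ((swapCoords s p).2 i)) =
      ∑ i, |f i (p.1 i) - f i (p.2 i)| := by
  refine ⟨Finset.univ.filter fun i => f i (p.1 i) < f i (p.2 i), Finset.sum_congr rfl fun i _ => ?_⟩
  by_cases h : f i (p.1 i) < f i (p.2 i)
  · simp [swapCoords, h, abs_of_neg (sub_neg.mpr h)]
  · simp [swapCoords, h, abs_of_nonneg (sub_nonneg.mpr (not_lt.mp h))]

end SwapCoords

section SymmetrizedOscillation

variable {ι α : Type*} [Fintype ι] [MeasurableSpace α]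
  {μ : ι → Measure α} [∀ i, SigmaFinite (μ i)] {f : ι → α → ℝ}

lemma aemeasurable_apply_fst_sub_apply_snd (hf : ∀ i, AEMeasurable (f i) (μ i)) (i : ι) :
    AEMeasurable (fun p : (ι → α) × (ι → α) => f i (p.1 i) - f i (p.2 i))
      ((Measure.pi μ).prod (Measure.pi μ)) :=
  have hcoord : AEMeasurable (fun x : ι → α => f i (x i)) (Measure.pi μ) :=
    (hf i).comp_quasiMeasurePreserving (Measure.quasiMeasurePreserving_eval μ i)
  hcoord.comp_fst.sub hcoord.comp_snd

variable [DecidableEq ι]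

lemma lintegral_lintegral_sum_abs_sub_le (hf : ∀ i, AEMeasurable (f i) (μ i)) :
    ∫⁻ x, ∫⁻ y, ENNReal.ofReal (∑ i, |f i (x i) - f i (y i)|) ∂Measure.pi μ ∂Measure.pi μ ≤
      2 ^ Fintype.card ι *
        ∫⁻ x, ∫⁻ y, ENNReal.ofReal |∑ i, (f i (x i) - f i (y i))| ∂Measure.pi μ ∂Measure.pi μ := by
  set π := (Measure.pi μ).prod (Measure.pi μ)
  set G : (ι → α) × (ι → α) → ℝ≥0∞ := fun p => ENNReal.ofReal |∑ i, (f i (p.1 i) - f i (p.2 i))|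
  have hG : AEMeasurable G π := ENNReal.measurable_ofReal.comp_aemeasurable
    (Finset.aemeasurable_fun_sum _ fun i _ => aemeasurable_apply_fst_sub_apply_snd hf i).abs
  have hF : AEMeasurable (fun p => ENNReal.ofReal (∑ i, |f i (p.1 i) - f i (p.2 i)|)) π :=
    ENNReal.measurable_ofReal.comp_aemeasurable
      (Finset.aemeasurable_fun_sum _ fun i _ => (aemeasurable_apply_fst_sub_apply_snd hf i).abs)
  rw [← lintegral_prod _ hF, ← lintegral_prod _ hG]
  have hpointwise : ∀ p, ENNReal.ofReal (∑ i, |f i (p.1 i) - f i (p.2 i)|) ≤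
      ∑ s : Finset ι, G (swapCoords s p) := fun p => by
    obtain ⟨t, ht⟩ := exists_sum_sub_swapCoords_eq_sum_abs f p
    calc ENNReal.ofReal (∑ i, |f i (p.1 i) - f i (p.2 i)|) ≤ G (swapCoords t p) := by
          rw [← ht]; exact ENNReal.ofReal_le_ofReal (le_abs_self _)
      _ ≤ ∑ s : Finset ι, G (swapCoords s p) :=
          Finset.single_le_sum (f := fun s => G (swapCoords s p)) (fun _ _ => zero_le)
            (Finset.mem_univ t)
  have hswap : ∀ s : Finset ι, ∫⁻ p, G (swapCoords s p) ∂π = ∫⁻ p, G p ∂π := fun s => by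
    have hs := measurePreserving_swapCoords μ s
    rw [← lintegral_map' (hs.map_eq.symm ▸ hG) hs.measurable.aemeasurable, hs.map_eq]
  calc ∫⁻ p, ENNReal.ofReal (∑ i, |f i (p.1 i) - f i (p.2 i)|) ∂π
      ≤ ∫⁻ p, ∑ s : Finset ι, G (swapCoords s p) ∂π := lintegral_mono hpointwise
    _ = ∑ s : Finset ι, ∫⁻ p, G (swapCoords s p) ∂π := lintegral_finsetSum' _ fun s _ =>
          hG.comp_quasiMeasurePreserving (measurePreserving_swapCoords μ s).quasiMeasurePreserving
    _ = 2 ^ Fintype.card ι * ∫⁻ p, G p ∂π := by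
          simp only [hswap, Finset.sum_const, Finset.card_univ, Fintype.card_finset, nsmul_eq_mul,
            Nat.cast_pow, Nat.cast_ofNat]

end SymmetrizedOscillation

theorem sum_abs_osc_le_pow_bracketStarStarStar_general {n m : ℕ} (b : Fin m → En n → ℝ)
    (hb : ∀ i, LocallyIntegrable (b i) volume)
    (c : En n) (r : ℝ) (hr : 0 < r) :
    (volume (cube c r) ^ (2 * m))⁻¹ *
        (∫⁻ x in cubeProd m c r, ∫⁻ y in cubeProd m c r,
          ENNReal.ofReal (∑ i, |b i (x i) - b i (y i)|)) ≤
      2 ^ m * bracketStarStarStar b := by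
  have hrestrict : volume.restrict (cubeProd m c r) =
      Measure.pi fun _ : Fin m => volume.restrict (cube c r) := by
    rw [cubeProd, volume_pi, Measure.restrict_pi_pi]
  have hosc := lintegral_lintegral_sum_abs_sub_le fun i =>
    (hb i).aestronglyMeasurable.aemeasurable.restrict (s := cube c r)
  rw [Fintype.card_fin, ← hrestrict] at hosc
  calc (volume (cube c r) ^ (2 * m))⁻¹ *
        (∫⁻ x in cubeProd m c r, ∫⁻ y in cubeProd m c r,
          ENNReal.ofReal (∑ i, |b i (x i) - b i (y i)|))
      ≤ (volume (cube c r) ^ (2 * m))⁻¹ * (2 ^ m * ∫⁻ x in cubeProd m c r,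
          ∫⁻ y in cubeProd m c r, ENNReal.ofReal |∑ i, (b i (x i) - b i (y i))|) := by
        gcongr
    _ = 2 ^ m * ((volume (cube c r) ^ (2 * m))⁻¹ * ∫⁻ x in cubeProd m c r,
          ∫⁻ y in cubeProd m c r, ENNReal.ofReal |∑ i, (b i (x i) - b i (y i))|) :=
        mul_left_comm _ _ _
    _ ≤ 2 ^ m * bracketStarStarStar b := by
        gcongr
        exact le_iSup₂_of_le c r (le_iSup_of_le hr le_rfl)

/-- if `[b]_{***} < ∞` then for every cube `Q = Q(c, r)`,
`|Q|^{-2m} ∫_{Q^m} ∫_{Q^m} ∑ᵢ |bᵢ(xᵢ) − bᵢ(yᵢ)| dy⃗ dx⃗ ≤ 2^m [b]_{***}`. -/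
theorem sum_abs_osc_le_pow_bracketStarStarStar {n m : ℕ} (b : Fin m → En n → ℝ)
    (hb : ∀ i, LocallyIntegrable (b i) volume)
    (hfin : bracketStarStarStar b < ⊤) (c : En n) (r : ℝ) (hr : 0 < r) :
    (volume (cube c r) ^ (2 * m))⁻¹ *
        (∫⁻ x in cubeProd m c r, ∫⁻ y in cubeProd m c r,
          ENNReal.ofReal (∑ i, |b i (x i) - b i (y i)|)) ≤
      2 ^ m * bracketStarStarStar b :=
  sum_abs_osc_le_pow_bracketStarStarStar_general b hb c r hr

end
end
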